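/- arXiv:1602.01918 — 2 statements merged into one kernel-verified Lean document; each statement's English description precedes it below -/
import Mathlib

section
/- Let A_* = Σ_m l_m \bar{l}_m^T for l_m ∈ ℂ³, A = Re(A_*) (its real symmetric part), and b = i Σ_m l_m × \bar{l}_m. Then b^T A b ≤ 4 det(A). -/
open Matrix

open scoped ComplexOrder in
lemma aux_det_nonneg {n m : ℕ} (B : Matrix (Fin m) (Fin n) ℂ) :
    ∃ r : ℝ, 0 ≤ r ∧ (Bᴴ * B).det = (r : ℂ) := by
  have hpsd := Matrix.posSemidef_conjTranspose_mul_self B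
  have hH := hpsd.isHermitian
  refine ⟨∏ i, hH.eigenvalues i, Finset.prod_nonneg fun i _ => hpsd.eigenvalues_nonneg i, ?_⟩
  rw [hH.det_eq_prod_eigenvalues]
  push_cast
  rfl

/-- For `A = Re(∑ₘ lₘ l̄ₘᵀ)` and `b = i ∑ₘ lₘ × l̄ₘ` (real by construction),
we have `bᵀ A b ≤ 4 det A`. -/
theorem b_A_inequality (N : ℕ) (l : Fin N → Fin 3 → ℂ)
    (A : Matrix (Fin 3) (Fin 3) ℝ)
    (hA : A = fun j k => (∑ m, l m j * star (l m k)).re)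
    (b : Fin 3 → ℝ)
    (hb : b = fun j => (Complex.I * ∑ m, crossProduct (l m) (fun i => star (l m i)) j).re) :
    b ⬝ᵥ A.mulVec b ≤ 4 * A.det := by
  set M : Matrix (Fin 3) (Fin 3) ℂ := Matrix.of fun j k => ∑ m, l m j * star (l m k) with hMdef
  set B : Matrix (Fin N) (Fin 3) ℂ := Matrix.of fun m j => star (l m j) with hBdef
  have hMB : M = Bᴴ * B := by
    ext j k
    simp [hMdef, hBdef, Matrix.mul_apply, Matrix.conjTranspose_apply, mul_comm]
  obtain ⟨r, hr, hMr⟩ := hMB ▸ aux_det_nonneg B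
  have hsym : ∀ j k, M k j = star (M j k) := by
    intro j k
    simp [hMdef, Finset.sum_apply, mul_comm]
  have hdiag : ∀ j, (M j j).im = 0 := by
    intro j
    have h := congrArg Complex.im (hsym j j)
    simp only [Complex.star_def, Complex.conj_im] at h
    linarith
  have hb0 : b 0 = -2 * (M 1 2).im := by
    have h : (∑ m, crossProduct (l m) (fun i => (starRingEnd ℂ) (l m i)) 0) = M 1 2 - M 2 1 := by
      simp [cross_apply, hMdef, Finset.sum_sub_distrib]
    simp only [hb, h, hsym 1 2, Complex.mul_re, Complex.I_re, Complex.I_im, Complex.sub_re,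
      Complex.sub_im, Complex.star_def, Complex.conj_re, Complex.conj_im]
    ring
  have hb1 : b 1 = 2 * (M 0 2).im := by
    have h : (∑ m, crossProduct (l m) (fun i => (starRingEnd ℂ) (l m i)) 1) = M 2 0 - M 0 2 := by
      simp [cross_apply, hMdef, Finset.sum_sub_distrib]
    simp only [hb, h, hsym 0 2, Complex.mul_re, Complex.I_re, Complex.I_im, Complex.sub_re,
      Complex.sub_im, Complex.star_def, Complex.conj_re, Complex.conj_im]
    ring
  have hb2 : b 2 = -2 * (M 0 1).im := by
    have h : (∑ m, crossProduct (l m) (fun i => (starRingEnd ℂ) (l m i)) 2) = M 0 1 - M 1 0 := by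
      simp [cross_apply, hMdef, Finset.sum_sub_distrib]
    simp only [hb, h, hsym 0 1, Complex.mul_re, Complex.I_re, Complex.I_im, Complex.sub_re,
      Complex.sub_im, Complex.star_def, Complex.conj_re, Complex.conj_im]
    ring
  have hAe : ∀ j k, A j k = (M j k).re := by
    intro j k
    simp [hA, hMdef]
  have hre : (M.det).re = r := by rw [hMr]; simp
  have expand : (M.det).re = 4⁻¹ * (4 * A.det - b ⬝ᵥ A.mulVec b) := by
    rw [Matrix.det_fin_three M, Matrix.det_fin_three A, hsym 0 1, hsym 0 2, hsym 1 2]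
    simp only [Matrix.mulVec, dotProduct, Fin.sum_univ_three, hb0, hb1, hb2,
      hAe 0 0, hAe 0 1, hAe 0 2, hAe 1 0, hAe 1 1, hAe 1 2, hAe 2 0, hAe 2 1, hAe 2 2,
      hsym 0 1, hsym 0 2, hsym 1 2,
      Complex.mul_re, Complex.mul_im, Complex.sub_re, Complex.sub_im, Complex.add_re,
      Complex.add_im, Complex.star_def, Complex.conj_re, Complex.conj_im,
      hdiag 0, hdiag 1, hdiag 2]
    ring
  have h4 : (0:ℝ) ≤ 4⁻¹ * (4 * A.det - b ⬝ᵥ A.mulVec b) := by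
    rw [← expand, hre]; exact hr
  linarith
end

section
/- Let A = diag(a₁, a₁, a₃) with a₁ ≠ a₃ and b = (0, 0, b₃) with b₃ ≠ 0. Then the set of solutions (r, n̂) ∈ (0,1]×S² to b + 2rA n̂ = C n̂ (for some C ∈ ℝ) consists of: (i) n̂ = (0,0,±1) for every r, and (ii) all (r, n̂) with r n̂₃ = b₃/(2(a₁ − a₃)) with n̂₁, n̂₂ arbitrary (a plane of critical points intersecting the axis solution at r = |b₃|/(2|a₁ − a₃|)). -/
/-- For `A = diag(a₁, a₁, a₃)` with `a₁ ≠ a₃` and `b = (0,0,b₃)`, `b₃ ≠ 0`, the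
critical points in `(0,1] × S²` are exactly the poles `n̂ = (0,0,±1)` together with
the plane `r n̂₃ = b₃/(2(a₁ − a₃))`. -/
theorem double_eigenvalue_critical_set (a1 a3 b3 : ℝ) (hne : a1 ≠ a3) (hb3 : b3 ≠ 0)
    (a : Fin 3 → ℝ) (ha : a = ![a1, a1, a3])
    (b : Fin 3 → ℝ) (hb : b = ![0, 0, b3]) :
    ∀ r : ℝ, 0 < r → r ≤ 1 → ∀ nh : Fin 3 → ℝ, ∑ j, nh j ^ 2 = 1 →
      ((∃ C : ℝ, ∀ j, b j + 2 * r * a j * nh j = C * nh j)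
        ↔ ((nh 0 = 0 ∧ nh 1 = 0 ∧ (nh 2 = 1 ∨ nh 2 = -1))
            ∨ r * nh 2 = b3 / (2 * (a1 - a3)))) := by
  subst ha hb
  have hsub : a1 - a3 ≠ 0 := sub_ne_zero.mpr hne
  intro r hr hr1 nh hsum
  rw [Fin.sum_univ_three] at hsum
  constructor
  · rintro ⟨C, hC⟩
    have h0 := hC 0
    have h1 := hC 1
    have h2 := hC 2
    simp only [Matrix.cons_val_zero, Matrix.cons_val_one, Matrix.head_cons,
      Matrix.cons_val_two, Matrix.tail_cons, zero_add] at h0 h1 h2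
    by_cases hn0 : nh 0 = 0
    · by_cases hn1 : nh 1 = 0
      · left
        refine ⟨hn0, hn1, ?_⟩
        have hsq : (nh 2 - 1) * (nh 2 + 1) = 0 := by
          rw [hn0, hn1] at hsum; nlinarith
        rcases mul_eq_zero.mp hsq with h | h
        · left; linarith
        · right; linarith
      · right
        have hC' : C = 2 * r * a1 := by
          have := mul_right_cancel₀ hn1 (by linarith [h1] : 2 * r * a1 * nh 1 = C * nh 1)
          linarith
        rw [hC'] at h2
        field_simp
        linear_combination -h2
    · right
      have hC' : C = 2 * r * a1 := by
        have := mul_right_cancel₀ hn0 (by linarith [h0] : 2 * r * a1 * nh 0 = C * nh 0)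
        linarith
      rw [hC'] at h2
      field_simp
      linear_combination -h2
  · rintro (⟨h0, h1, h2⟩ | hplane)
    · refine ⟨b3 * nh 2 + 2 * r * a3, fun j => ?_⟩
      fin_cases j
      · show (0:ℝ) + 2 * r * a1 * nh 0 = _ * nh 0
        rw [h0]; ring
      · show (0:ℝ) + 2 * r * a1 * nh 1 = _ * nh 1
        rw [h1]; ring
      · show b3 + 2 * r * a3 * nh 2 = _ * nh 2
        rcases h2 with h | h <;> rw [h] <;> ring
    · refine ⟨2 * r * a1, fun j => ?_⟩
      have key : 2 * (a1 - a3) * (r * nh 2) = b3 := by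
        rw [hplane]; field_simp
      fin_cases j
      · show (0:ℝ) + 2 * r * a1 * nh 0 = 2 * r * a1 * nh 0
        ring
      · show (0:ℝ) + 2 * r * a1 * nh 1 = 2 * r * a1 * nh 1
        ring
      · show b3 + 2 * r * a3 * nh 2 = 2 * r * a1 * nh 2
        linear_combination -key
end
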